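/- Fix reals a < b and θ, and set Δ = b − a. For each integer k ≥ 1 define midpoints m_i = a + (2i−1)·Δ/(2k) for i = 1, …, k, and probabilities p_1 = Φ(m_1 − θ), p_i = Φ(m_i − θ) − Φ(m_{i−1} − θ) for 2 ≤ i ≤ k, p_{k+1} = 1 − Φ(m_k − θ), together with q_1 = −φ(m_1 − θ), q_i = φ(m_{i−1} − θ) − φ(m_i − θ) for 2 ≤ i ≤ k, and q_{k+1} = φ(m_k − θ) (the q_i are the derivatives of the p_i in θ). Then the Fisher information I_k(θ) = Σ_{i=1}^{k+1} q_i²/p_i of the k-bit uniform quantization of a N(θ,1) sample onto the alphabet {a, a+Δ/k, …, b} converges, as k → ∞, to the Fisher information of the rectified Gaussian N^R(θ,1,[a,b]): lim_{k→∞} I_k(θ) = φ(a−θ)²/Φ(a−θ) + φ(b−θ)²/(1−Φ(b−θ)) + Φ(b−θ) − Φ(a−θ) + (a−θ)·φ(a−θ) − (b−θ)·φ(b−θ). -/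

import Mathlib

open MeasureTheory Real Filter

/-- Standard Gaussian density. -/
noncomputable def phi (x : ℝ) : ℝ := (Real.sqrt (2 * Real.pi))⁻¹ * Real.exp (-(x ^ 2) / 2)

/-- Standard Gaussian cumulative distribution function. -/
noncomputable def Phi (x : ℝ) : ℝ := ∫ t in Set.Iic x, phi t

/-- The `i`-th cell midpoint of the uniform `k`-point grid on `[a, b]`. -/
noncomputable def mid (a b : ℝ) (k i : ℕ) : ℝ := a + (2 * (i : ℝ) - 1) * (b - a) / (2 * (k : ℝ))

/-- Probability that a quantized `N(θ,1)` sample takes the `i`-th alphabet value. -/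
noncomputable def pQ (a b θ : ℝ) (k i : ℕ) : ℝ :=
  if i = 1 then Phi (mid a b k 1 - θ)
  else if i = k + 1 then 1 - Phi (mid a b k k - θ)
  else Phi (mid a b k i - θ) - Phi (mid a b k (i - 1) - θ)

/-- Derivative in `θ` of the probability `pQ`. -/
noncomputable def qQ (a b θ : ℝ) (k i : ℕ) : ℝ :=
  if i = 1 then -phi (mid a b k 1 - θ)
  else if i = k + 1 then phi (mid a b k k - θ)
  else phi (mid a b k (i - 1) - θ) - phi (mid a b k i - θ)

/-!
After centring at `θ`, a cell `[u, v]` of the grid contributes `(φ u - φ v)² / (Φ v - Φ u)`,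
which is `(∫ x φ)² / ∫ φ` over the cell. It differs from `∫ x² φ` by `∫ φ` times the variance of
the Gaussian restricted to the cell, and that variance lies between `0` and `((v - u) / 2)²`.
Summing over the interior cells, the middle part of the quantized Fisher information is within
`(Δ / 2k)²` of `∫ x² φ` between the extreme midpoints, which tends to `∫_{a-θ}^{b-θ} x² φ`. The two
outer cells converge to the censoring terms `φ(a-θ)² / Φ(a-θ)` and `φ(b-θ)² / (1 - Φ(b-θ))`.
-/

open Finset Topology ProbabilityTheory

lemma phi_eq_gaussianPDFReal : phi = gaussianPDFReal 0 1 := by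
  ext x
  simp [phi, gaussianPDFReal]

lemma phi_pos (x : ℝ) : 0 < phi x :=
  phi_eq_gaussianPDFReal ▸ gaussianPDFReal_pos 0 1 x one_ne_zero

lemma continuous_phi : Continuous phi := by
  unfold phi
  fun_prop

lemma integrable_phi : Integrable phi :=
  phi_eq_gaussianPDFReal ▸ integrable_gaussianPDFReal 0 1

lemma integral_phi : ∫ x, phi x = 1 :=
  phi_eq_gaussianPDFReal ▸ integral_gaussianPDFReal_eq_one 0 one_ne_zero

lemma hasDerivAt_phi (x : ℝ) : HasDerivAt phi (-x * phi x) x := by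
  have h : HasDerivAt (fun y : ℝ => -(y ^ 2) / 2) (-x) x := by
    simpa using ((hasDerivAt_pow 2 x).neg.div_const 2).congr_deriv (by ring)
  exact (h.exp.const_mul _).congr_deriv (by unfold phi; ring)

lemma integral_phi_eq_sub (u v : ℝ) : ∫ x in u..v, phi x = Phi v - Phi u :=
  (intervalIntegral.integral_Iic_sub_Iic integrable_phi.integrableOn
    integrable_phi.integrableOn).symm

lemma hasDerivAt_Phi (x : ℝ) : HasDerivAt Phi (phi x) x := by
  have h : HasDerivAt (fun y => Phi 0 + ∫ t in (0 : ℝ)..y, phi t) (phi x) x :=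
    (intervalIntegral.integral_hasDerivAt_right (continuous_phi.intervalIntegrable _ _)
      (continuous_phi.stronglyMeasurableAtFilter _ _) continuous_phi.continuousAt).const_add _
  simpa [integral_phi_eq_sub] using h

lemma continuous_Phi : Continuous Phi :=
  continuous_iff_continuousAt.2 fun x => (hasDerivAt_Phi x).continuousAt

lemma strictMono_Phi : StrictMono Phi :=
  strictMono_of_hasDerivAt_pos hasDerivAt_Phi phi_pos

lemma Phi_nonneg (x : ℝ) : 0 ≤ Phi x :=
  setIntegral_nonneg measurableSet_Iic fun t _ => (phi_pos t).le

lemma Phi_le_one (x : ℝ) : Phi x ≤ 1 :=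
  integral_phi ▸ setIntegral_le_integral integrable_phi
    (Eventually.of_forall fun t => (phi_pos t).le)

lemma Phi_pos (x : ℝ) : 0 < Phi x :=
  (Phi_nonneg (x - 1)).trans_lt (strictMono_Phi (by linarith))

lemma Phi_lt_one (x : ℝ) : Phi x < 1 :=
  (strictMono_Phi (lt_add_one x)).trans_le (Phi_le_one (x + 1))

lemma integral_mul_phi (u v : ℝ) : ∫ x in u..v, x * phi x = phi u - phi v := by
  have hd : ∀ x ∈ Set.uIcc u v, HasDerivAt (fun y => -phi y) (x * phi x) x := fun x _ =>
    (hasDerivAt_phi x).neg.congr_deriv (by ring)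
  rw [intervalIntegral.integral_eq_sub_of_hasDerivAt hd
    ((continuous_id.mul continuous_phi).intervalIntegrable u v)]
  ring

/-- `∫_{-∞}^x t² φ t dt`. -/
noncomputable def partialSecondMoment (x : ℝ) : ℝ := Phi x - x * phi x

lemma continuous_partialSecondMoment : Continuous partialSecondMoment :=
  continuous_Phi.sub (continuous_id.mul continuous_phi)

lemma integral_sq_mul_phi (u v : ℝ) :
    ∫ x in u..v, x ^ 2 * phi x = partialSecondMoment v - partialSecondMoment u := by
  have hd : ∀ x ∈ Set.uIcc u v, HasDerivAt partialSecondMoment (x ^ 2 * phi x) x := fun x _ =>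
    ((hasDerivAt_Phi x).sub ((hasDerivAt_id' x).mul (hasDerivAt_phi x))).congr_deriv (by ring)
  exact intervalIntegral.integral_eq_sub_of_hasDerivAt hd
    (((continuous_pow 2).mul continuous_phi).intervalIntegrable u v)

section WeightedVariance

variable {w : ℝ → ℝ} {u v : ℝ}

lemma integral_sub_sq_mul (hw : Continuous w) (c : ℝ) :
    ∫ x in u..v, (x - c) ^ 2 * w x =
      (∫ x in u..v, x ^ 2 * w x) - 2 * c * (∫ x in u..v, x * w x) +
        c ^ 2 * ∫ x in u..v, w x := by
  have hint : ∀ n : ℕ, IntervalIntegrable (fun x => x ^ n * w x) volume u v := fun n =>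
    ((continuous_pow n).mul hw).intervalIntegrable u v
  have e : (fun x => (x - c) ^ 2 * w x) =
      fun x => x ^ 2 * w x - 2 * c * (x ^ 1 * w x) + c ^ 2 * (x ^ 0 * w x) := by
    ext x
    ring
  rw [e, intervalIntegral.integral_add ((hint 2).sub ((hint 1).const_mul _)) ((hint 0).const_mul _),
    intervalIntegral.integral_sub (hint 2) ((hint 1).const_mul _),
    intervalIntegral.integral_const_mul, intervalIntegral.integral_const_mul]
  simp

lemma integral_sq_mul_sub_sq_div_eq (hw : Continuous w) (hP : 0 < ∫ x in u..v, w x) (c : ℝ) :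
    (∫ x in u..v, x ^ 2 * w x) - (∫ x in u..v, x * w x) ^ 2 / ∫ x in u..v, w x =
      (∫ x in u..v, (x - c) ^ 2 * w x) -
        ((∫ x in u..v, x * w x) - c * ∫ x in u..v, w x) ^ 2 / ∫ x in u..v, w x := by
  rw [integral_sub_sq_mul hw]
  field_simp
  ring

lemma sq_integral_mul_div_le_integral_sq_mul (hw : Continuous w)
    (hw₀ : ∀ x ∈ Set.Icc u v, 0 ≤ w x) (huv : u ≤ v) (hP : 0 < ∫ x in u..v, w x) :
    (∫ x in u..v, x * w x) ^ 2 / (∫ x in u..v, w x) ≤ ∫ x in u..v, x ^ 2 * w x := by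
  have hvar := integral_sq_mul_sub_sq_div_eq hw hP ((∫ x in u..v, x * w x) / ∫ x in u..v, w x)
  have hnonneg :
      0 ≤ ∫ x in u..v, (x - (∫ x in u..v, x * w x) / ∫ x in u..v, w x) ^ 2 * w x :=
    intervalIntegral.integral_nonneg huv fun x hx => mul_nonneg (sq_nonneg _) (hw₀ x hx)
  rw [div_mul_cancel₀ _ hP.ne', sub_self, zero_pow two_ne_zero, zero_div, sub_zero] at hvar
  linarith

lemma integral_sq_mul_le_sq_integral_mul_div_add (hw : Continuous w)
    (hw₀ : ∀ x ∈ Set.Icc u v, 0 ≤ w x) (huv : u ≤ v) (hP : 0 < ∫ x in u..v, w x) :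
    ∫ x in u..v, x ^ 2 * w x ≤
      (∫ x in u..v, x * w x) ^ 2 / (∫ x in u..v, w x) +
        ((v - u) / 2) ^ 2 * ∫ x in u..v, w x := by
  have hvar := integral_sq_mul_sub_sq_div_eq hw hP ((u + v) / 2)
  have hspread : ∫ x in u..v, (x - (u + v) / 2) ^ 2 * w x ≤
      ∫ x in u..v, ((v - u) / 2) ^ 2 * w x := by
    refine intervalIntegral.integral_mono_on huv (((continuous_id.sub continuous_const).pow 2).mul
      hw |>.intervalIntegrable u v) ((continuous_const.mul hw).intervalIntegrable u v) ?_
    intro x hx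
    refine mul_le_mul_of_nonneg_right ?_ (hw₀ x hx)
    nlinarith [hx.1, hx.2]
  rw [intervalIntegral.integral_const_mul] at hspread
  have : 0 ≤ ((∫ x in u..v, x * w x) - (u + v) / 2 * ∫ x in u..v, w x) ^ 2 /
      ∫ x in u..v, w x := by positivity
  linarith

end WeightedVariance

noncomputable def cellFisherInfo (u v : ℝ) : ℝ := (phi u - phi v) ^ 2 / (Phi v - Phi u)

lemma abs_cellFisherInfo_sub_le {u v : ℝ} (huv : u < v) :
    |cellFisherInfo u v - (partialSecondMoment v - partialSecondMoment u)| ≤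
      ((v - u) / 2) ^ 2 * (Phi v - Phi u) := by
  have hP : 0 < ∫ x in u..v, phi x := by
    rw [integral_phi_eq_sub]
    exact sub_pos.2 (strictMono_Phi huv)
  have hw₀ : ∀ x ∈ Set.Icc u v, 0 ≤ phi x := fun x _ => (phi_pos x).le
  have hlow := sq_integral_mul_div_le_integral_sq_mul continuous_phi hw₀ huv.le hP
  have hup := integral_sq_mul_le_sq_integral_mul_div_add continuous_phi hw₀ huv.le hP
  rw [integral_mul_phi, integral_sq_mul_phi, integral_phi_eq_sub] at hlow hup
  rw [abs_sub_le_iff, cellFisherInfo]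
  constructor <;> linarith

lemma abs_sum_cellFisherInfo_sub_le {y : ℕ → ℝ} {h : ℝ} {n : ℕ}
    (hy : ∀ j < n, y j < y (j + 1)) (hh : ∀ j < n, y (j + 1) - y j ≤ h) :
    |∑ j ∈ range n, cellFisherInfo (y j) (y (j + 1)) -
        (partialSecondMoment (y n) - partialSecondMoment (y 0))| ≤ (h / 2) ^ 2 := by
  rw [← sum_range_sub (fun j => partialSecondMoment (y j)), ← sum_sub_distrib]
  calc _ ≤ ∑ j ∈ range n, |cellFisherInfo (y j) (y (j + 1)) -
          (partialSecondMoment (y (j + 1)) - partialSecondMoment (y j))| := abs_sum_le_sum_abs _ _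
    _ ≤ ∑ j ∈ range n, (h / 2) ^ 2 * (Phi (y (j + 1)) - Phi (y j)) := by
        refine sum_le_sum fun j hj => (abs_cellFisherInfo_sub_le (hy j (mem_range.1 hj))).trans ?_
        have hstep := hy j (mem_range.1 hj)
        gcongr
        · exact sub_nonneg.2 (strictMono_Phi hstep).le
        · exact hh j (mem_range.1 hj)
    _ = (h / 2) ^ 2 * (Phi (y n) - Phi (y 0)) := by
        rw [← mul_sum, sum_range_sub (fun j => Phi (y j))]
    _ ≤ (h / 2) ^ 2 := mul_le_of_le_one_right (sq_nonneg _)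
        (by linarith [Phi_nonneg (y 0), Phi_le_one (y n)])

lemma mid_succ_sub_mid (a b : ℝ) {k : ℕ} (hk : k ≠ 0) (i : ℕ) :
    mid a b k (i + 1) - mid a b k i = (b - a) / k := by
  unfold mid
  field_simp
  push_cast
  ring

lemma tendsto_mid_one (a b : ℝ) : Tendsto (fun k : ℕ => mid a b k 1) atTop (𝓝 a) := by
  have h := (tendsto_const_div_atTop_nhds_zero_nat ((b - a) / 2)).const_add a
  rw [add_zero] at h
  refine h.congr fun k => ?_
  unfold mid
  ring

lemma tendsto_mid_self (a b : ℝ) : Tendsto (fun k : ℕ => mid a b k k) atTop (𝓝 b) := by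
  have h := (tendsto_const_div_atTop_nhds_zero_nat ((b - a) / 2)).const_sub b
  rw [sub_zero] at h
  refine h.congr' ?_
  filter_upwards [eventually_ne_atTop 0] with k hk
  unfold mid
  field_simp
  ring

lemma sum_Icc_qQ_sq_div_pQ (a b θ : ℝ) (n : ℕ) :
    ∑ i ∈ Icc 1 (n + 1 + 1), qQ a b θ (n + 1) i ^ 2 / pQ a b θ (n + 1) i =
      phi (mid a b (n + 1) 1 - θ) ^ 2 / Phi (mid a b (n + 1) 1 - θ) +
      ∑ j ∈ range n,
        cellFisherInfo (mid a b (n + 1) (j + 1) - θ) (mid a b (n + 1) (j + 1 + 1) - θ) +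
      phi (mid a b (n + 1) (n + 1) - θ) ^ 2 / (1 - Phi (mid a b (n + 1) (n + 1) - θ)) := by
  rw [← Ico_add_one_right_eq_Icc, sum_Ico_eq_sum_range, Nat.add_sub_cancel, sum_range_succ,
    sum_range_succ']
  have hcell : ∀ j ∈ range n,
      qQ a b θ (n + 1) (1 + (j + 1)) ^ 2 / pQ a b θ (n + 1) (1 + (j + 1)) =
      cellFisherInfo (mid a b (n + 1) (j + 1) - θ) (mid a b (n + 1) (j + 1 + 1) - θ) := by
    intro j hj
    have hjn := mem_range.1 hj
    rw [qQ, pQ, if_neg (by omega), if_neg (by omega), if_neg (by omega), if_neg (by omega),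
      cellFisherInfo, show 1 + (j + 1) - 1 = j + 1 by omega, show 1 + (j + 1) = j + 1 + 1 by omega]
  rw [sum_congr rfl hcell]
  simp only [qQ, pQ, add_zero, ↓reduceIte, even_two, Even.neg_pow, add_comm 1 (n + 1),
    Nat.add_eq_right, Nat.add_eq_zero_iff, one_ne_zero, and_false, add_left_inj]
  ring

lemma tendsto_sum_cellFisherInfo_mid {a b : ℝ} (hab : a < b) (θ : ℝ) :
    Tendsto (fun n : ℕ => ∑ j ∈ range n,
        cellFisherInfo (mid a b (n + 1) (j + 1) - θ) (mid a b (n + 1) (j + 1 + 1) - θ))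
      atTop (𝓝 (partialSecondMoment (b - θ) - partialSecondMoment (a - θ))) := by
  have hstep : ∀ n j : ℕ, mid a b (n + 1) (j + 1 + 1) - θ - (mid a b (n + 1) (j + 1) - θ) =
      (b - a) / (n + 1 : ℕ) := fun n j => by
    rw [sub_sub_sub_cancel_right, mid_succ_sub_mid a b n.succ_ne_zero]
  have hclose : ∀ n : ℕ, |∑ j ∈ range n,
        cellFisherInfo (mid a b (n + 1) (j + 1) - θ) (mid a b (n + 1) (j + 1 + 1) - θ) -
      (partialSecondMoment (mid a b (n + 1) (n + 1) - θ) -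
        partialSecondMoment (mid a b (n + 1) 1 - θ))| ≤ ((b - a) / (n + 1 : ℕ) / 2) ^ 2 := by
    intro n
    refine abs_sum_cellFisherInfo_sub_le (y := fun j => mid a b (n + 1) (j + 1) - θ)
      (fun j _ => sub_pos.1 ?_) (fun j _ => (hstep n j).le)
    rw [hstep]
    exact div_pos (sub_pos.2 hab) (Nat.cast_pos.2 n.succ_pos)
  have hmesh : Tendsto (fun n : ℕ => ((b - a) / (n + 1 : ℕ) / 2) ^ 2) atTop (𝓝 0) := by
    simpa using (((tendsto_const_div_atTop_nhds_zero_nat (b - a)).comp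
      (tendsto_add_atTop_nat 1)).div_const 2).pow 2
  have hends : Tendsto (fun n : ℕ => partialSecondMoment (mid a b (n + 1) (n + 1) - θ) -
      partialSecondMoment (mid a b (n + 1) 1 - θ)) atTop
      (𝓝 (partialSecondMoment (b - θ) - partialSecondMoment (a - θ))) := by
    refine ((continuous_partialSecondMoment.tendsto _).comp ?_).sub
      ((continuous_partialSecondMoment.tendsto _).comp ?_)
    · exact ((tendsto_mid_self a b).comp (tendsto_add_atTop_nat 1)).sub_const θ
    · exact ((tendsto_mid_one a b).comp (tendsto_add_atTop_nat 1)).sub_const θ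
  simpa using (squeeze_zero_norm hclose hmesh).add hends

/-- The Fisher information of the `k`-level uniform quantization of a `N(θ,1)`
sample on `[a,b]` converges, as `k → ∞`, to the Fisher information of the
rectified Gaussian `N^R(θ, 1, [a,b])`. -/
theorem quantized_fisher_info_tendsto_rectified (a b θ : ℝ) (hab : a < b) :
    Tendsto (fun k : ℕ => ∑ i ∈ Finset.Icc 1 (k + 1), qQ a b θ k i ^ 2 / pQ a b θ k i)
      atTop
      (nhds (phi (a - θ) ^ 2 / Phi (a - θ) + phi (b - θ) ^ 2 / (1 - Phi (b - θ)) +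
        Phi (b - θ) - Phi (a - θ) + (a - θ) * phi (a - θ) - (b - θ) * phi (b - θ))) := by
  rw [← tendsto_add_atTop_iff_nat 1]
  simp only [sum_Icc_qQ_sq_div_pQ]
  have hleft : Tendsto (fun n : ℕ => mid a b (n + 1) 1 - θ) atTop (𝓝 (a - θ)) :=
    ((tendsto_mid_one a b).comp (tendsto_add_atTop_nat 1)).sub_const θ
  have hright : Tendsto (fun n : ℕ => mid a b (n + 1) (n + 1) - θ) atTop (𝓝 (b - θ)) :=
    ((tendsto_mid_self a b).comp (tendsto_add_atTop_nat 1)).sub_const θ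
  have hlower := (((continuous_phi.tendsto _).comp hleft).pow 2).div
    ((continuous_Phi.tendsto _).comp hleft) (Phi_pos _).ne'
  have hupper := (((continuous_phi.tendsto _).comp hright).pow 2).div
    (((continuous_Phi.tendsto _).comp hright).const_sub 1) (sub_ne_zero.2 (Phi_lt_one _).ne')
  convert (hlower.add (tendsto_sum_cellFisherInfo_mid hab θ)).add hupper using 2
  · rfl
  · unfold partialSecondMoment
    ring
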